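/- Let M ≥ 2 be an integer, let a ∈ ℝ with a ≠ 0, and let r be a real number with r ≥ D(M−1) + 1, where D(t) = t^{t/2}/2^{t−1}. Then the geometric progression A = {a·r^i : i = 0, 1, …, M−1} satisfies C(A) = M−1, the highest possible complexity of a set of size M. -/

import Mathlib

/-- The (additive) complexity of a set `A` of reals: the smallest positive integer `θ`
for which there exist reals `x 1, ..., x θ, y 1, ..., y θ` with
`A ⊆ {x 1, y 1} + ... + {x θ, y θ}` (Minkowski sumset). -/
noncomputable def complexity (A : Set ℝ) : ℕ :=
  sInf {θ : ℕ | 0 < θ ∧ ∃ x y : Fin θ → ℝ,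
    A ⊆ {t : ℝ | ∃ z : Fin θ → ℝ, (∀ i, z i = x i ∨ z i = y i) ∧ t = ∑ i, z i}}

/-!
Any `m + 1` points lie in a sumset of `m` pairs, by telescoping. Conversely, suppose
`a r ^ i ∈ {x₁, y₁} + ⋯ + {x_θ, y_θ}` for `i ≤ m` with `θ < m`. Then
`a r ^ i = ∑ x + ∑ⱼ εᵢⱼ (yⱼ - xⱼ)` with `εᵢ ∈ {0, 1}^θ`, and the `m + 1` vectors `(1, εᵢ)` in
`ℝ^(θ+1)` are linearly dependent. Cramer's rule, applied where the first of them falls into the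
span of its predecessors, yields a nonzero integer relation `∑ cᵢ (1, εᵢ) = 0` whose entries are
determinants of `0/1` matrices with a row of ones; by Hadamard's inequality they are at most
`D(m) ≤ r - 1` in absolute value. But the relation forces `∑ cᵢ r ^ i = 0`, which is impossible
for nonzero integer digits of absolute value below `r`.
-/

open Matrix

theorem prod_le_sum_div_card_pow {ι : Type*} [Fintype ι] (z : ι → ℝ) (hz : ∀ i, 0 ≤ z i) :
    ∏ i, z i ≤ ((∑ i, z i) / Fintype.card ι) ^ Fintype.card ι := by
  rcases isEmpty_or_nonempty ι with hι | hι
  · simp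
  have hcard : (Fintype.card ι : ℝ) ≠ 0 := by positivity
  have amgm := Real.geom_mean_le_arith_mean_weighted Finset.univ (fun _ => (Fintype.card ι : ℝ)⁻¹)
    z (fun _ _ => by positivity) (by simp [hcard]) (fun i _ => hz i)
  calc ∏ i, z i = (∏ i, z i ^ (Fintype.card ι : ℝ)⁻¹) ^ Fintype.card ι := by
        rw [← Finset.prod_pow]
        refine Finset.prod_congr rfl fun i _ => ?_
        rw [← Real.rpow_natCast, ← Real.rpow_mul (hz i), inv_mul_cancel₀ hcard, Real.rpow_one]
    _ ≤ (∑ i, (Fintype.card ι : ℝ)⁻¹ * z i) ^ Fintype.card ι := by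
        gcongr
        exact Finset.prod_nonneg fun i _ => Real.rpow_nonneg (hz i) _
    _ = ((∑ i, z i) / Fintype.card ι) ^ Fintype.card ι := by
        rw [← Finset.mul_sum, inv_mul_eq_div]

theorem Matrix.PosSemidef.det_le_trace_div_card_pow {n : Type*} [Fintype n] [DecidableEq n]
    {G : Matrix n n ℝ} (hG : G.PosSemidef) :
    G.det ≤ (G.trace / Fintype.card n) ^ Fintype.card n := by
  rw [hG.isHermitian.det_eq_prod_eigenvalues, hG.isHermitian.trace_eq_sum_eigenvalues]
  simpa using prod_le_sum_div_card_pow _ hG.eigenvalues_nonneg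

theorem Matrix.det_sq_le_of_forall_eq_one_or_eq_neg_one {n : Type*} [Fintype n] [DecidableEq n]
    (E : Matrix n n ℝ) (hE : ∀ i j, E i j = 1 ∨ E i j = -1) :
    E.det ^ 2 ≤ (Fintype.card n : ℝ) ^ Fintype.card n := by
  have hdiag : ∀ i, (E * Eᵀ) i i = Fintype.card n := fun i => by
    have : ∀ j, E i j * E i j = 1 := fun j => by rcases hE i j with h | h <;> simp [h]
    simp [mul_apply, this]
  have htrace : (E * Eᵀ).trace = Fintype.card n * Fintype.card n := by
    simp [trace, hdiag]
  rcases isEmpty_or_nonempty n with hn | hn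
  · simp
  have hpsd : (E * Eᵀ).PosSemidef := by
    simpa using posSemidef_self_mul_conjTranspose E
  calc E.det ^ 2 = (E * Eᵀ).det := by rw [det_mul, det_transpose, sq]
    _ ≤ _ := hpsd.det_le_trace_div_card_pow
    _ = _ := by rw [htrace, mul_div_cancel_right₀ _ (by positivity)]

theorem Matrix.exists_intCast_det_eq {n : Type*} [Fintype n] [DecidableEq n] (A : Matrix n n ℝ)
    (hA : ∀ i j, ∃ z : ℤ, A i j = z) : ∃ z : ℤ, A.det = z := by
  choose B hB using hA
  exact ⟨(of B).det, by rw [Int.cast_det]; congr; ext; simp [hB]⟩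

noncomputable def hadamardBound (t : ℕ) : ℝ := (t : ℝ) ^ ((t : ℝ) / 2) / 2 ^ (t - 1)

theorem hadamardBound_nonneg (t : ℕ) : 0 ≤ hadamardBound t := by
  unfold hadamardBound; positivity

theorem four_pow_eq_two_pow_sq (k : ℕ) : (4 : ℝ) ^ k = (2 ^ k) ^ 2 := by
  rw [← pow_mul, mul_comm, pow_mul]; norm_num

theorem hadamardBound_sq (t : ℕ) : hadamardBound t ^ 2 = (t : ℝ) ^ t / 4 ^ (t - 1) := by
  rw [hadamardBound, div_pow, ← Real.rpow_natCast _ 2, ← Real.rpow_mul (Nat.cast_nonneg t),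
    Nat.cast_ofNat, div_mul_cancel₀ _ two_ne_zero, Real.rpow_natCast, four_pow_eq_two_pow_sq]

theorem four_mul_pow_self_le_succ_pow_succ (n : ℕ) (hn : 1 ≤ n) :
    4 * (n : ℝ) ^ n ≤ (n + 1 : ℝ) ^ (n + 1) := by
  have hbernoulli : 1 + n * (1 / n : ℝ) ≤ (1 + 1 / n) ^ n :=
    one_add_mul_le_pow (by linarith [show (0 : ℝ) ≤ 1 / n by positivity]) n
  have htwo : 2 * (n : ℝ) ^ n ≤ (n + 1) ^ n := by
    have hn' : (n : ℝ) ≠ 0 := by positivity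
    calc 2 * (n : ℝ) ^ n = (1 + n * (1 / n : ℝ)) * n ^ n := by field_simp; ring
      _ ≤ (1 + 1 / n) ^ n * n ^ n := by gcongr
      _ = (n + 1) ^ n := by rw [← mul_pow]; field_simp
  have : (2 : ℝ) ≤ n + 1 := by norm_cast; omega
  calc 4 * (n : ℝ) ^ n = 2 * (2 * n ^ n) := by ring
    _ ≤ (n + 1) * (n + 1) ^ n := by gcongr
    _ = (n + 1) ^ (n + 1) := by ring

theorem hadamardBound_mono : Monotone hadamardBound := by
  refine monotone_nat_of_le_succ fun n => ?_
  rw [← pow_le_pow_iff_left₀ (hadamardBound_nonneg _) (hadamardBound_nonneg _) two_ne_zero,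
    hadamardBound_sq, hadamardBound_sq]
  rcases Nat.eq_zero_or_pos n with rfl | hn
  · norm_num
  obtain ⟨k, rfl⟩ : ∃ k, n = k + 1 := ⟨n - 1, by omega⟩
  have h := four_mul_pow_self_le_succ_pow_succ (k + 1) (by omega)
  rw [div_le_div_iff₀ (by positivity) (by positivity), Nat.add_sub_cancel, Nat.add_sub_cancel,
    pow_succ 4 k]
  push_cast at h ⊢
  nlinarith [show (0 : ℝ) < 4 ^ k by positivity]

theorem Matrix.abs_det_le_hadamardBound {n : Type*} [Fintype n] [DecidableEq n]
    (A : Matrix n n ℝ) (hA : ∀ i j, A i j = 0 ∨ A i j = 1) (i₀ : n) (hi₀ : ∀ j, A i₀ j = 1) :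
    |A.det| ≤ hadamardBound (Fintype.card n) := by
  set q := Fintype.card n
  let E : Matrix n n ℝ := of fun i j => 2 * A i j - 1
  have hE : ∀ i j, E i j = 1 ∨ E i j = -1 := fun i j => by
    rcases hA i j with h | h <;> norm_num [E, h]
  -- adding row `i₀` to every other row of `E` turns it into `A` with those rows doubled
  have hdet : E.det = 2 ^ (q - 1) * A.det := by
    have hrows : E.det = (of fun i j => (if i = i₀ then 1 else 2) * A i j).det :=
      det_eq_of_forall_row_eq_smul_add_const (fun i => if i = i₀ then 0 else -1) i₀ (by simp)
        fun i j => by by_cases hi : i = i₀ <;> simp [E, hi, hi₀] <;> ring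
    rw [hrows, det_mul_column]
    simp [Finset.prod_ite, Finset.filter_ne', Finset.card_erase_of_mem, q]
  refine abs_le_of_sq_le_sq ?_ (hadamardBound_nonneg q)
  rw [hadamardBound_sq, le_div_iff₀ (by positivity)]
  calc A.det ^ 2 * 4 ^ (q - 1) = E.det ^ 2 := by rw [hdet, four_pow_eq_two_pow_sq]; ring
    _ ≤ (q : ℝ) ^ q := E.det_sq_le_of_forall_eq_one_or_eq_neg_one hE

theorem Matrix.exists_intCast_det_eq_of_zero_one {n : Type*} [Fintype n] [DecidableEq n]
    (A : Matrix n n ℝ) (hA : ∀ i j, A i j = 0 ∨ A i j = 1) (i₀ : n) (hi₀ : ∀ j, A i₀ j = 1) :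
    ∃ z : ℤ, A.det = z ∧ |(z : ℝ)| ≤ hadamardBound (Fintype.card n) := by
  obtain ⟨z, hz⟩ := A.exists_intCast_det_eq fun i j => by
    rcases hA i j with h | h
    exacts [⟨0, by simp [h]⟩, ⟨1, by simp [h]⟩]
  exact ⟨z, hz, hz ▸ A.abs_det_le_hadamardBound hA i₀ hi₀⟩

theorem exists_det_ne_zero_of_linearIndependent {K ι : Type*} [Field K] [Fintype ι] {k : ℕ}
    (u : Fin k → ι → K) (hu : LinearIndependent K u) (j₀ : ι) (hj₀ : (fun l => u l j₀) ≠ 0) :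
    ∃ g : Fin k → ι, j₀ ∈ Set.range g ∧ (of fun a l => u l (g a)).det ≠ 0 := by
  classical
  set U : Matrix (Fin k) ι K := of u
  have hcols : Submodule.span K (Set.range U.col) = ⊤ := by
    refine Submodule.eq_top_of_finrank_eq ?_
    rw [← U.rank_eq_finrank_span_cols, LinearIndependent.rank_matrix (M := U) hu]
    simp
  -- the columns of `U` span `K ^ k`; extend column `j₀` to a basis made of columns
  obtain ⟨J, -, hj₀J, hspanJ, hJ⟩ := exists_linearIndepOn_extension
    ((linearIndepOn_singleton_iff K).2 hj₀ : LinearIndepOn K U.col {j₀}) (Set.subset_univ _)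
  have hJspan : Submodule.span K (Set.range fun j : J => U.col j) = ⊤ := by
    rw [eq_top_iff, ← hcols, ← Set.image_univ, ← Set.image_eq_range]
    exact Submodule.span_le.2 hspanJ
  have hcard : Fintype.card J = k := by
    rw [linearIndependent_iff_card_eq_finrank_span.1 hJ, Set.finrank, hJspan]
    simp
  let e := (Fintype.equivFinOfCardEq hcard).symm
  refine ⟨fun a => e a, ⟨e.symm ⟨j₀, hj₀J rfl⟩, by simp⟩, ?_⟩
  rw [← isUnit_iff_ne_zero, ← isUnit_iff_isUnit_det, ← linearIndependent_rows_iff_isUnit]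
  exact hJ.comp e e.injective

theorem exists_int_smul_eq_sum_of_mem_span {ι : Type*} [Fintype ι] {k : ℕ}
    (u : Fin (k + 1) → ι → ℝ) (hu : LinearIndependent ℝ u) (v : ι → ℝ)
    (hv : v ∈ Submodule.span ℝ (Set.range u)) (hu01 : ∀ l j, u l j = 0 ∨ u l j = 1)
    (hv01 : ∀ j, v j = 0 ∨ v j = 1) (j₀ : ι) (hu₀ : ∀ l, u l j₀ = 1) (hv₀ : v j₀ = 1) :
    ∃ (c : Fin (k + 1) → ℤ) (d : ℤ), d ≠ 0 ∧ ∑ l, (c l : ℝ) • u l = (d : ℝ) • v ∧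
      (∀ l, |(c l : ℝ)| ≤ hadamardBound (k + 1)) ∧ |(d : ℝ)| ≤ hadamardBound (k + 1) := by
  obtain ⟨g, ⟨a₀, rfl⟩, hdet⟩ := exists_det_ne_zero_of_linearIndependent u hu j₀
    fun h => by simpa [hu₀] using congrFun h 0
  obtain ⟨x, hx⟩ := (Submodule.mem_span_range_iff_exists_fun ℝ).1 hv
  set A : Matrix (Fin (k + 1)) (Fin (k + 1)) ℝ := of fun a l => u l (g a)
  set b : Fin (k + 1) → ℝ := fun a => v (g a)
  have hcramer : A.cramer b = A.det • x := by
    have hAx : A *ᵥ x = b := by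
      ext a
      simp [A, b, ← hx, mulVec, dotProduct, Finset.sum_apply, mul_comm]
    rw [← hAx, cramer_eq_adjugate_mulVec, mulVec_mulVec, adjugate_mul, smul_mulVec, one_mulVec]
  have hminor : ∀ l, ∃ z : ℤ, (A.updateCol l b).det = z ∧ |(z : ℝ)| ≤ hadamardBound (k + 1) := by
    intro l
    simpa using (A.updateCol l b).exists_intCast_det_eq_of_zero_one
      (fun a l' => by by_cases h : l' = l <;> simp [h, A, b, hu01, hv01]) a₀
      (fun l' => by by_cases h : l' = l <;> simp [h, A, b, hu₀, hv₀])
  choose c hc using hminor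
  obtain ⟨d, hd, hdbound⟩ : ∃ z : ℤ, A.det = z ∧ |(z : ℝ)| ≤ hadamardBound (k + 1) := by
    simpa using A.exists_intCast_det_eq_of_zero_one (fun a l => hu01 l (g a)) a₀ fun l => hu₀ l
  refine ⟨c, d, fun h => hdet (by simp [hd, h]), ?_, fun l => (hc l).2, hdbound⟩
  have hc' : ∀ l, (c l : ℝ) = d * x l := fun l => by
    rw [← (hc l).1, ← cramer_apply, hcramer, ← hd]; rfl
  simp [hc', ← hx, Finset.smul_sum, mul_smul]

theorem exists_int_relation_of_not_linearIndependent {ι : Type*} [Fintype ι] {n : ℕ}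
    (w : Fin (n + 1) → ι → ℝ) (hw : ¬LinearIndependent ℝ w) (hw01 : ∀ i j, w i j = 0 ∨ w i j = 1)
    (j₀ : ι) (hw₀ : ∀ i, w i j₀ = 1) :
    ∃ c : Fin (n + 1) → ℤ, c ≠ 0 ∧ ∑ i, (c i : ℝ) • w i = 0 ∧
      ∀ i, |(c i : ℝ)| ≤ hadamardBound n := by
  induction n with
  | zero =>
    refine absurd (Fintype.linearIndependent_iff.2 fun g hg i => ?_) hw
    simpa [hw₀, Fin.fin_one_eq_zero i] using congrFun hg j₀
  | succ n ih =>
    rw [← Fin.snoc_init_self w, linearIndependent_finSnoc, not_and_not_right] at hw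
    by_cases hinit : LinearIndependent ℝ (Fin.init w)
    · obtain ⟨c, d, hd, hcd, hc, hdb⟩ := exists_int_smul_eq_sum_of_mem_span (Fin.init w) hinit
        (w (Fin.last _)) (hw hinit) (fun l => hw01 _) (hw01 _) j₀ (fun l => hw₀ _) (hw₀ _)
      refine ⟨Fin.snoc c (-d), fun h => hd (by simpa using congrFun h (Fin.last _)), ?_,
        fun i => Fin.lastCases (by simpa using hdb) (fun l => by simpa using hc l) i⟩
      rw [Fin.sum_univ_castSucc]
      simpa [Fin.init, ← sub_eq_add_neg] using sub_eq_zero.2 hcd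
    · obtain ⟨c, hc0, hcw, hcb⟩ := ih (Fin.init w) hinit (fun i => hw01 _) fun i => hw₀ _
      refine ⟨Fin.snoc c 0, fun h => hc0 (funext fun l => by simpa using congrFun h l.castSucc),
        ?_, fun i => Fin.lastCases (by simp [hadamardBound_nonneg]) (fun l => ?_) i⟩
      · rw [Fin.sum_univ_castSucc]
        simpa [Fin.init] using hcw
      · simpa using (hcb l).trans (hadamardBound_mono n.le_succ)

theorem abs_sum_mul_pow_le {n : ℕ} {r : ℝ} (hr : 1 ≤ r) (c : Fin n → ℝ)
    (hc : ∀ i, |c i| ≤ r - 1) : |∑ i, c i * r ^ (i : ℕ)| ≤ r ^ n - 1 := by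
  calc |∑ i, c i * r ^ (i : ℕ)| ≤ ∑ i, |c i| * r ^ (i : ℕ) := by
        simpa [abs_mul, abs_of_nonneg (by positivity : 0 ≤ r)] using
          Finset.abs_sum_le_sum_abs (fun i => c i * r ^ (i : ℕ)) Finset.univ
    _ ≤ ∑ i : Fin n, (r - 1) * r ^ (i : ℕ) := by gcongr with i; exact hc i
    _ = r ^ n - 1 := by
        rw [← Finset.mul_sum, Fin.sum_univ_eq_sum_range (r ^ ·), mul_comm, geom_sum_mul]

theorem sum_intCast_mul_pow_ne_zero {r : ℝ} {n : ℕ} (c : Fin n → ℤ) (hc : c ≠ 0)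
    (hcr : ∀ i, |(c i : ℝ)| ≤ r - 1) : ∑ i, (c i : ℝ) * r ^ (i : ℕ) ≠ 0 := by
  induction n with
  | zero => exact absurd (Subsingleton.elim c 0) hc
  | succ n ih =>
    have hr : 1 ≤ r := by linarith [abs_nonneg (c 0 : ℝ), hcr 0]
    rw [Fin.sum_univ_castSucc]
    by_cases hlast : c (Fin.last n) = 0
    · have hinit : Fin.init c ≠ 0 := fun h => hc <| by
        rw [← Fin.snoc_init_self c, h, hlast]
        ext i; cases i using Fin.lastCases <;> simp
      simpa [hlast, Fin.init] using ih _ hinit fun i => hcr _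
    · have hlow := abs_sum_mul_pow_le hr _ fun i => hcr (Fin.castSucc i)
      have hone : (1 : ℝ) ≤ |(c (Fin.last n) : ℝ)| := by exact_mod_cast Int.one_le_abs hlast
      intro h
      simp only [Fin.val_castSucc, Fin.val_last] at h
      rw [eq_neg_of_add_eq_zero_left h, abs_neg, abs_mul,
        abs_of_nonneg (by positivity : (0 : ℝ) ≤ r ^ n)] at hlow
      nlinarith [one_le_pow₀ hr (n := n)]

def pairSumset {θ : ℕ} (x y : Fin θ → ℝ) : Set ℝ :=
  {t | ∃ z : Fin θ → ℝ, (∀ i, z i = x i ∨ z i = y i) ∧ t = ∑ i, z i}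

theorem mem_pairSumset_iff {θ : ℕ} {x y : Fin θ → ℝ} {t : ℝ} :
    t ∈ pairSumset x y ↔
      ∃ ε : Fin θ → ℝ, (∀ i, ε i = 0 ∨ ε i = 1) ∧ t = ∑ i, x i + ε ⬝ᵥ (y - x) := by
  classical
  constructor
  · rintro ⟨z, hz, rfl⟩
    refine ⟨fun i => if z i = x i then 0 else 1,
      fun i => by by_cases h : z i = x i <;> simp [h], ?_⟩
    simp only [dotProduct, Pi.sub_apply, ← Finset.sum_add_distrib]
    refine Finset.sum_congr rfl fun i _ => ?_
    rcases hz i with h | h <;> by_cases h' : z i = x i <;> simp_all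
  · rintro ⟨ε, hε, rfl⟩
    refine ⟨fun i => x i + ε i * (y i - x i), fun i => ?_, ?_⟩
    · rcases hε i with h | h <;> simp [h]
    · simp [dotProduct, Finset.sum_add_distrib]

theorem exists_subset_pairSumset (f : ℕ → ℝ) {m : ℕ} (hm : 0 < m) :
    ∃ x y : Fin m → ℝ, {t | ∃ i < m + 1, t = f i} ⊆ pairSumset x y := by
  classical
  let x : Fin m → ℝ := Pi.single ⟨0, hm⟩ (f 0)
  refine ⟨x, x + fun j : Fin m => f (j + 1) - f j, ?_⟩
  rintro _ ⟨k, hk, rfl⟩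
  refine mem_pairSumset_iff.2 ⟨fun j => if (j : ℕ) < k then 1 else 0, fun j => by
    by_cases h : (j : ℕ) < k <;> simp [h], ?_⟩
  have htele : ∑ j : Fin m, (if (j : ℕ) < k then f (j + 1) - f j else 0) = f k - f 0 := by
    rw [Fin.sum_univ_eq_sum_range (fun j => if j < k then f (j + 1) - f j else 0),
      ← Finset.sum_filter, show (Finset.range m).filter (· < k) = Finset.range k by
        ext j; simp only [Finset.mem_filter, Finset.mem_range]; omega, Finset.sum_range_sub]
  simp [x, dotProduct, htele]

theorem not_subset_pairSumset {m θ : ℕ} (hθ : θ < m) {a r : ℝ} (ha : a ≠ 0)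
    (hr : hadamardBound m + 1 ≤ r) (x y : Fin θ → ℝ) :
    ¬{t | ∃ i < m + 1, t = a * r ^ i} ⊆ pairSumset x y := by
  intro hsub
  choose ε hε01 hε using fun i : Fin (m + 1) => mem_pairSumset_iff.1 (hsub ⟨i, i.isLt, rfl⟩)
  let w : Fin (m + 1) → Fin (θ + 1) → ℝ := fun i => vecCons 1 (ε i)
  have hdep : ¬LinearIndependent ℝ w := fun h => by
    have := h.fintype_card_le_finrank
    simp only [Fintype.card_fin, Module.finrank_fin_fun] at this
    omega
  obtain ⟨c, hc0, hcw, hcb⟩ := exists_int_relation_of_not_linearIndependent w hdep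
    (fun i j => Fin.cases (by simp [w]) (fun j => by simpa [w] using hε01 i j) j) 0
    fun i => by simp [w]
  refine sum_intCast_mul_pow_ne_zero c hc0 (fun i => (hcb i).trans (by linarith)) ?_
  have hw : ∀ i : Fin (m + 1), a * r ^ (i : ℕ) = w i ⬝ᵥ vecCons (∑ j, x j) (y - x) := fun i => by
    rw [hε i, cons_dotProduct_cons, one_mul]
  have hsum : a * ∑ i, (c i : ℝ) * r ^ (i : ℕ) = 0 := calc
    _ = ∑ i, (c i : ℝ) * (w i ⬝ᵥ vecCons (∑ j, x j) (y - x)) := by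
      simp only [Finset.mul_sum, mul_left_comm a, hw]
    _ = (∑ i, (c i : ℝ) • w i) ⬝ᵥ vecCons (∑ j, x j) (y - x) := by
      simp [sum_dotProduct, smul_dotProduct]
    _ = 0 := by rw [hcw, zero_dotProduct]
  exact (mul_eq_zero.1 hsum).resolve_left ha

/-- Geometric progressions with common ratio `r ≥ D(M-1) + 1`, where
`D t = t^(t/2)/2^(t-1)` is the Hadamard bound, have the highest possible complexity
`M - 1`. -/
theorem stmt_13 (M : ℕ) (hM : 2 ≤ M) (a : ℝ) (ha : a ≠ 0) (r : ℝ)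
    (hr : ((M - 1 : ℕ) : ℝ) ^ (((M - 1 : ℕ) : ℝ) / 2) / 2 ^ (M - 1 - 1) + 1 ≤ r) :
    complexity {t : ℝ | ∃ i : ℕ, i < M ∧ t = a * r ^ i} = M - 1 := by
  obtain ⟨m, rfl⟩ : ∃ m, M = m + 1 := ⟨M - 1, by omega⟩
  simp only [Nat.add_sub_cancel] at hr ⊢
  obtain ⟨x, y, hxy⟩ := exists_subset_pairSumset (fun i => a * r ^ i) (by omega : 0 < m)
  refine le_antisymm (Nat.sInf_le ⟨by omega, x, y, hxy⟩) (le_csInf ⟨m, by omega, x, y, hxy⟩ ?_)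
  rintro θ ⟨-, x, y, hsub⟩
  by_contra! hθ
  exact not_subset_pairSumset hθ ha hr x y hsub
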